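/- arXiv:2510.13693 — 6 statements merged into one kernel-verified Lean document; each statement's English description precedes it below -/
import Mathlib

section
/- Let f : ℕ → ℝ, let A be a greedy set of f with |A| = m, let B be a finite subset of ℕ∖A, and let k be an integer with 0 ≤ k ≤ m. Then |𝟙*_B(f)| ≤ (|B|/(1+m−k))·ρ_{1,∞}(f,k), where the right-hand side is interpreted in [0,∞]. -/
open Filter ENNReal
open scoped Classical

noncomputable section

/-- Coordinate projection onto a finite set of indices. -/
def proj (A : Finset ℕ) (f : ℕ → ℝ) : ℕ → ℝ := fun n => if n ∈ A then f n else 0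

/-- Coordinate projection onto a set of indices. -/
def projSet (A : Set ℕ) (f : ℕ → ℝ) : ℕ → ℝ := fun n => if n ∈ A then f n else 0

/-- `𝟙*_A(f) = ∑_{n ∈ A} f n`. -/
def oneStar (f : ℕ → ℝ) (A : Finset ℕ) : ℝ := ∑ n ∈ A, f n

/-- `A` is a greedy set of `f`. -/
def GreedySet (f : ℕ → ℝ) (A : Finset ℕ) : Prop :=
  ∀ n ∈ A, ∀ k, k ∉ A → |f k| ≤ |f n|

/-- `β(f,A) = sup_{I ∈ ℐ} |𝟙*_{I∖A}(f)| ∈ [0,∞]`, the sup running over all finite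
integer intervals `I = [a,b]`. -/
def beta (f : ℕ → ℝ) (A : Finset ℕ) : ℝ≥0∞ :=
  ⨆ a : ℕ, ⨆ b : ℕ, ENNReal.ofReal |oneStar f (Finset.Icc a b \ A)|

/-- `‖f‖_𝔹 = sup_{A ∈ 𝒢(f)} β(f,A) ∈ [0,∞]`. -/
def BNorm (f : ℕ → ℝ) : ℝ≥0∞ :=
  ⨆ A ∈ {A : Finset ℕ | GreedySet f A}, beta f A

/-- Membership in `𝔹`, i.e. `‖f‖_𝔹 < ∞`. -/
def MemB (f : ℕ → ℝ) : Prop := BNorm f < ⊤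

/-- Membership in `c₀`. -/
def Memc0 (f : ℕ → ℝ) : Prop := Tendsto f atTop (nhds 0)

/-- Membership in `𝔹₀`. -/
def MemB0 (f : ℕ → ℝ) : Prop :=
  Memc0 f ∧ ∀ ε : ℝ, 0 < ε → ∃ A : Finset ℕ, GreedySet f A ∧
    ∀ B : Finset ℕ, GreedySet f B → A ⊆ B → beta f B < ENNReal.ofReal ε

/-- The net `(𝟙*_A(f))_{A ∈ 𝒢(f)}`, directed by inclusion, converges to `s`. -/
def GreedyLim (f : ℕ → ℝ) (s : ℝ) : Prop :=
  ∀ ε : ℝ, 0 < ε → ∃ A : Finset ℕ, GreedySet f A ∧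
    ∀ B : Finset ℕ, GreedySet f B → A ⊆ B → |oneStar f B - s| < ε

/-- Membership in `𝔸`. -/
def MemA (f : ℕ → ℝ) : Prop := Memc0 f ∧ ∃ s, GreedyLim f s

/-- `σ_g(f)`, the greedy sum of `f` (junk value `0` if the greedy net does not converge). -/
def sigmaG (f : ℕ → ℝ) : ℝ := if h : ∃ s, GreedyLim f s then h.choose else 0

/-- `‖f‖_𝔸 = sup_{A ∈ 𝒢(f)} |σ_g(f) - 𝟙*_A(f)|`. -/
def ANorm (f : ℕ → ℝ) : ℝ≥0∞ :=
  ⨆ A ∈ {A : Finset ℕ | GreedySet f A}, ENNReal.ofReal |sigmaG f - oneStar f A|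

/-- The series `∑_n f n` converges (in the ordered sense) to `s`. -/
def SeriesLim (f : ℕ → ℝ) (s : ℝ) : Prop :=
  Tendsto (fun m => ∑ n ∈ Finset.range m, f n) atTop (nhds s)

/-- Membership in `𝒔`: the series `∑_n f n` converges. -/
def MemSeries (f : ℕ → ℝ) : Prop := ∃ s, SeriesLim f s

/-- `σ_s(f) = ∑_{n=0}^∞ f n` (junk value `0` if the series does not converge). -/
def sigmaS (f : ℕ → ℝ) : ℝ := if h : ∃ s, SeriesLim f s then h.choose else 0

/-- `‖f‖_𝒔 = sup_m |∑_{n = m}^∞ f n|`, expressed via `σ_s(f)` minus partial sums. -/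
def sNorm (f : ℕ → ℝ) : ℝ≥0∞ :=
  ⨆ m : ℕ, ENNReal.ofReal |sigmaS f - ∑ n ∈ Finset.range m, f n|

/-- `D(f)(m)`: the `m`-th term (for `m ≥ 1`) of the nonincreasing rearrangement of `|f|`,
as an element of `[0,∞]`. -/
def Drearr (f : ℕ → ℝ) (m : ℕ) : ℝ≥0∞ :=
  sInf {t : ℝ≥0∞ | {n : ℕ | t < ENNReal.ofReal |f n|}.Finite ∧
    {n : ℕ | t < ENNReal.ofReal |f n|}.ncard < m}

/-- `ρ_{1,∞}(f,k) = sup_{m ≥ 1} m · D(f)(m+k) ∈ [0,∞]`. Note `ρ_{1,∞}(f,0) = ‖f‖_{1,∞}`. -/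
def rho (f : ℕ → ℝ) (k : ℕ) : ℝ≥0∞ :=
  ⨆ m : ℕ, ⨆ _ : 1 ≤ m, (m : ℝ≥0∞) * Drearr f (m + k)

/-- Membership in `h_{1,∞}`: `lim_m m · D(f)(m) = 0`. -/
def Memh1inf (f : ℕ → ℝ) : Prop :=
  Tendsto (fun m : ℕ => (m : ℝ≥0∞) * Drearr f m) atTop (nhds 0)

/-- A sequence of nonempty finite integer intervals which is right-dominant:
`max J_k < min J_{k+1}` for all `k`. -/
def RightDominant (J : ℕ → Finset ℕ) : Prop :=
  (∀ k : ℕ, ∃ a b : ℕ, a ≤ b ∧ J k = Finset.Icc a b) ∧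
  ∀ k : ℕ, ∀ n ∈ J k, ∀ m ∈ J (k + 1), n < m

/-- `g` is Leibnizian with admissible sequence `J`. -/
def Admissible (g : ℕ → ℝ) (J : ℕ → Finset ℕ) : Prop :=
  RightDominant J ∧
  (∀ n : ℕ, g n ≠ 0 → ∃ k, n ∈ J k) ∧
  (∀ k : ℕ, oneStar g (J (k + 1)) ≤ oneStar g (J k)) ∧
  (∀ k : ℕ, ∀ n ∈ J k, g n ≠ 0 → ∀ m ∈ J (k + 1), g m < g n)

end
/-- if `A` is a greedy set of `f` with `|A| = m`, `B` is a finite set disjoint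
from `A`, and `0 ≤ k ≤ m`, then `|𝟙*_B(f)| ≤ (|B|/(1+m−k))·ρ_{1,∞}(f,k)` in `[0,∞]`. -/
theorem stmt_2 (f : ℕ → ℝ) (A : Finset ℕ) (hA : GreedySet f A) (m : ℕ) (hm : A.card = m)
    (B : Finset ℕ) (hB : ∀ n ∈ B, n ∉ A) (k : ℕ) (hk : k ≤ m) :
    ENNReal.ofReal |oneStar f B| ≤
      (B.card : ℝ≥0∞) / ((1 + m - k : ℕ) : ℝ≥0∞) * rho f k := by
  set N : ℕ := 1 + m - k with hN
  have hN1 : 1 ≤ N := by omega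
  have hNm : N + k = m + 1 := by omega
  have hD : ∀ n ∉ A, ENNReal.ofReal |f n| ≤ Drearr f (m+1) := by
    intro n hn
    apply le_sInf
    intro t ht
    by_contra h
    push_neg at h
    have hsub : (↑(insert n A) : Set ℕ) ⊆ {j : ℕ | t < ENNReal.ofReal |f j|} := by
      intro j hj
      simp only [Finset.coe_insert, Set.mem_insert_iff, Finset.mem_coe] at hj
      rcases hj with rfl | hj
      · exact h
      · exact lt_of_lt_of_le h (ENNReal.ofReal_le_ofReal (hA j hj n hn))
    have hcard := Set.ncard_le_ncard hsub ht.1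
    rw [Set.ncard_coe_finset, Finset.card_insert_of_notMem hn, hm] at hcard
    have := ht.2
    omega
  have hrho : (N : ℝ≥0∞) * Drearr f (m+1) ≤ rho f k := by
    calc (N : ℝ≥0∞) * Drearr f (m+1) = (N : ℝ≥0∞) * Drearr f (N+k) := by rw [hNm]
    _ ≤ rho f k := le_iSup₂_of_le N hN1 le_rfl
  have h1 : ENNReal.ofReal |oneStar f B| ≤ (B.card : ℝ≥0∞) * Drearr f (m+1) := by
    calc ENNReal.ofReal |oneStar f B|
        ≤ ENNReal.ofReal (∑ n ∈ B, |f n|) :=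
          ENNReal.ofReal_le_ofReal (Finset.abs_sum_le_sum_abs _ _)
    _ = ∑ n ∈ B, ENNReal.ofReal |f n| :=
          ENNReal.ofReal_sum_of_nonneg (fun n _ => abs_nonneg _)
    _ ≤ ∑ n ∈ B, Drearr f (m+1) := Finset.sum_le_sum (fun n hn => hD n (hB n hn))
    _ = (B.card : ℝ≥0∞) * Drearr f (m+1) := by rw [Finset.sum_const, nsmul_eq_mul]
  have hNne : (N : ℝ≥0∞) ≠ 0 := by
    simp; omega
  have hNnt : (N : ℝ≥0∞) ≠ ⊤ := ENNReal.natCast_ne_top N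
  have hdiv : Drearr f (m+1) ≤ rho f k / N := by
    rw [ENNReal.le_div_iff_mul_le (Or.inl hNne) (Or.inl hNnt), mul_comm]
    exact hrho
  calc ENNReal.ofReal |oneStar f B| ≤ (B.card : ℝ≥0∞) * Drearr f (m+1) := h1
  _ ≤ (B.card : ℝ≥0∞) * (rho f k / N) := mul_le_mul_right hdiv _
  _ = (B.card : ℝ≥0∞) / (N : ℝ≥0∞) * rho f k := by
      rw [ENNReal.div_eq_inv_mul, ENNReal.div_eq_inv_mul]; ring
end

section
/- For every f : ℕ → ℝ one has ‖f‖_𝔹 ≤ ∑_{n} |f(n)| as elements of [0,∞]. If f(n) ≥ 0 for all n, then ‖f‖_𝔹 = ∑_{n} f(n). Moreover, every f with ∑_{n} |f(n)| < ∞ belongs to 𝔹₀. -/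
open Filter ENNReal
open scoped Classical

/-! The triangle inequality bounds every `β(f,A)` by `∑|f|`, and for nonnegative `f` the
intervals `[0,b]` together with the empty greedy set recover the whole sum. For `f ∈ ℓ₁` choose a
finite `F` off which `∑|f| < ε`. A level set `{|f| ≥ c}`, with `c > 0` below every nonzero `|f n|`
on `F`, is a greedy set containing the support of `f` on `F`; hence for every greedy `B` above it
the sets `I ∖ B` only meet the tail of `f` off `F`. -/

section

variable {f g : ℕ → ℝ}

lemma ofReal_abs_oneStar_le_beta (f : ℕ → ℝ) (A : Finset ℕ) (a b : ℕ) :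
    ENNReal.ofReal |oneStar f (Finset.Icc a b \ A)| ≤ beta f A :=
  le_iSup_of_le a (le_iSup_of_le b le_rfl)

lemma beta_le_tsum (f : ℕ → ℝ) (A : Finset ℕ) :
    beta f A ≤ ∑' n, ENNReal.ofReal |f n| := by
  refine iSup₂_le fun a b => ?_
  calc ENNReal.ofReal |oneStar f (Finset.Icc a b \ A)|
      ≤ ENNReal.ofReal (∑ n ∈ Finset.Icc a b \ A, |f n|) :=
        ENNReal.ofReal_le_ofReal (Finset.abs_sum_le_sum_abs _ _)
    _ = ∑ n ∈ Finset.Icc a b \ A, ENNReal.ofReal |f n| :=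
        ENNReal.ofReal_sum_of_nonneg fun n _ => abs_nonneg _
    _ ≤ ∑' n, ENNReal.ofReal |f n| := ENNReal.sum_le_tsum _

lemma beta_congr {B : Finset ℕ} (h : ∀ n ∉ B, f n = g n) : beta f B = beta g B := by
  unfold beta oneStar
  congr! 5 with a b
  refine congrArg _ (Finset.sum_congr rfl fun n hn => h n (Finset.mem_sdiff.mp hn).2)

lemma beta_le_BNorm {A : Finset ℕ} (hA : GreedySet f A) : beta f A ≤ BNorm f :=
  le_iSup₂_of_le (f := fun A (_ : A ∈ {A : Finset ℕ | GreedySet f A}) => beta f A) A hA le_rfl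

lemma greedySet_empty (f : ℕ → ℝ) : GreedySet f ∅ := fun _ hn => absurd hn (Finset.notMem_empty _)

lemma BNorm_le_tsum (f : ℕ → ℝ) : BNorm f ≤ ∑' n, ENNReal.ofReal |f n| :=
  iSup₂_le fun A _ => beta_le_tsum f A

lemma tsum_ofReal_le_beta_empty (hf : ∀ n, 0 ≤ f n) :
    ∑' n, ENNReal.ofReal (f n) ≤ beta f ∅ := by
  rw [ENNReal.tsum_eq_iSup_sum' (fun b => Finset.Icc 0 b)
    fun t => ⟨t.sup id, fun n hn => Finset.mem_Icc.mpr ⟨n.zero_le, Finset.le_sup (f := id) hn⟩⟩]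
  refine iSup_le fun b => ?_
  have hsum : 0 ≤ oneStar f (Finset.Icc 0 b \ ∅) := Finset.sum_nonneg fun n _ => hf n
  calc ∑ n ∈ Finset.Icc 0 b, ENNReal.ofReal (f n)
      = ENNReal.ofReal |oneStar f (Finset.Icc 0 b \ ∅)| := by
        rw [abs_of_nonneg hsum, oneStar, Finset.sdiff_empty,
          ENNReal.ofReal_sum_of_nonneg fun n _ => hf n]
    _ ≤ beta f ∅ := ofReal_abs_oneStar_le_beta f ∅ 0 b

lemma greedySet_filter_range {c : ℝ} {M : ℕ} (hM : ∀ n ≥ M, |f n| < c) :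
    GreedySet f ((Finset.range M).filter fun n => c ≤ |f n|) := by
  intro n hn k hk
  refine le_trans ?_ (Finset.mem_filter.mp hn).2
  by_contra! hck
  have hkM : k < M := by_contra fun h => (hM k (not_lt.mp h)).not_ge hck.le
  exact hk (Finset.mem_filter.mpr ⟨Finset.mem_range.mpr hkM, hck.le⟩)

lemma exists_greedySet_forall_mem (hf : Tendsto f atTop (nhds 0)) (F : Finset ℕ) :
    ∃ A, GreedySet f A ∧ ∀ n ∈ F, f n ≠ 0 → n ∈ A := by
  have hc : ∀ᶠ c in nhdsWithin (0 : ℝ) (Set.Ioi 0), 0 < c ∧ ∀ n ∈ F, f n ≠ 0 → c ≤ |f n| := by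
    refine eventually_mem_nhdsWithin.and ((Finset.eventually_all F).2 fun n _ => ?_)
    by_cases hn : f n = 0
    · exact Eventually.of_forall fun _ h => absurd hn h
    · exact (eventually_le_nhds (abs_pos.mpr hn)).filter_mono nhdsWithin_le_nhds
        |>.mono fun _ h _ => h
  obtain ⟨c, hcpos, hcF⟩ := hc.exists
  obtain ⟨M, hM⟩ := eventually_atTop.mp <|
    ((tendsto_zero_iff_abs_tendsto_zero f).mp hf).eventually (gt_mem_nhds hcpos)
  refine ⟨_, greedySet_filter_range hM, fun n hn hfn => Finset.mem_filter.mpr ⟨?_, hcF n hn hfn⟩⟩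
  exact Finset.mem_range.mpr <| not_le.mp fun h => (hM n h).not_ge (hcF n hn hfn)

lemma exists_tsum_indicator_compl_lt {u : ℕ → ℝ≥0∞} (hu : ∑' n, u n ≠ ∞) {δ : ℝ≥0∞}
    (hδ : 0 < δ) : ∃ F : Finset ℕ, ∑' n, (F : Set ℕ)ᶜ.indicator u n < δ := by
  obtain ⟨F, hF⟩ := ((ENNReal.tendsto_tsum_compl_atTop_zero hu).eventually (gt_mem_nhds hδ)).exists
  exact ⟨F, by rwa [← tsum_subtype]⟩

lemma memB0_of_summable_abs (hs : Summable fun n => |f n|) : MemB0 f := by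
  have hf : Tendsto f atTop (nhds 0) := (summable_abs_iff.mp hs).tendsto_atTop_zero
  refine ⟨hf, fun ε hε => ?_⟩
  have hfin : ∑' n, ENNReal.ofReal |f n| ≠ ∞ := by
    rw [← ENNReal.ofReal_tsum_of_nonneg (fun n => abs_nonneg _) hs]
    exact ENNReal.ofReal_ne_top
  obtain ⟨F, hF⟩ := exists_tsum_indicator_compl_lt hfin (ENNReal.ofReal_pos.mpr hε)
  obtain ⟨A, hA, hAF⟩ := exists_greedySet_forall_mem hf F
  refine ⟨A, hA, fun B _ hAB => ?_⟩
  have hcongr : ∀ n ∉ B, f n = (F : Set ℕ)ᶜ.indicator f n := by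
    intro n hnB
    by_cases hnF : n ∈ F
    · rw [Set.indicator_of_notMem (by simpa using hnF)]
      exact by_contra fun h => hnB (hAB (hAF n hnF h))
    · rw [Set.indicator_of_mem (by simpa using hnF)]
  have hind : ∀ n, ENNReal.ofReal |(F : Set ℕ)ᶜ.indicator f n| =
      (F : Set ℕ)ᶜ.indicator (fun n => ENNReal.ofReal |f n|) n := by
    intro n
    by_cases hnF : n ∈ (F : Set ℕ)ᶜ <;> simp [hnF]
  calc beta f B = beta ((F : Set ℕ)ᶜ.indicator f) B := beta_congr hcongr
    _ ≤ ∑' n, ENNReal.ofReal |(F : Set ℕ)ᶜ.indicator f n| := beta_le_tsum _ B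
    _ < ENNReal.ofReal ε := by simpa only [hind] using hF

end

/-- `‖f‖_𝔹 ≤ ∑_n |f n|` in `[0,∞]`; with equality `‖f‖_𝔹 = ∑_n f n`
when `f` is nonnegative; and `ℓ₁ ⊆ 𝔹₀`. -/
theorem stmt_5 (f : ℕ → ℝ) :
    BNorm f ≤ ∑' n, ENNReal.ofReal |f n| ∧
    ((∀ n, 0 ≤ f n) → BNorm f = ∑' n, ENNReal.ofReal (f n)) ∧
    ((Summable fun n => |f n|) → MemB0 f) := by
  refine ⟨BNorm_le_tsum f, fun hf => le_antisymm ?_ ?_, memB0_of_summable_abs⟩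
  · simpa only [abs_of_nonneg (hf _)] using BNorm_le_tsum f
  · exact (tsum_ofReal_le_beta_empty hf).trans (beta_le_BNorm (greedySet_empty f))
end

section
/- Let t > 0 and let g : ℕ → [0,∞) be a nonnegative sequence with g ∈ c₀ and ∑_n g(n) = ∞. Then there exist a set A ⊆ ℕ and a sequence 𝒥 = (J_k)_{k≥1} of finite integer intervals such that S_A(g) is Leibnizian with admissible sequence 𝒥 and ω(S_A(g),𝒥) ≥ t. -/
open Filter ENNReal
open scoped Classical

/-- if `t > 0` and `g ≥ 0` is in `c₀` with `∑_n g n = ∞`, then there are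
`A ⊆ ℕ` and a sequence `J` of finite integer intervals such that `S_A(g)` is Leibnizian
with admissible sequence `J` and `ω(S_A(g), J) ≥ t`. -/
theorem stmt_6 (t : ℝ) (ht : 0 < t) (g : ℕ → ℝ) (hg0 : ∀ n, 0 ≤ g n)
    (hgc0 : Memc0 g) (hgsum : ¬ Summable g) :
    ∃ (A : Set ℕ) (J : ℕ → Finset ℕ),
      Admissible (projSet A g) J ∧
      ∃ w : ℝ, Filter.Tendsto (fun k => oneStar (projSet A g) (J k))
          Filter.atTop (nhds w) ∧ t ≤ w := by

  classical
  -- ε-smallness from c₀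
  have hc0 : ∀ ε : ℝ, 0 < ε → ∃ N : ℕ, ∀ n, N ≤ n → g n < ε := by
    intro ε hε
    have h := hgc0.eventually (gt_mem_nhds hε)
    rcases Filter.eventually_atTop.mp h with ⟨N, hN⟩
    exact ⟨N, hN⟩
  -- divergence of tails
  have hdiv : ∀ a : ℕ, ∀ c : ℝ, ∃ b : ℕ, a ≤ b ∧ c ≤ ∑ n ∈ Finset.Icc a b, g n := by
    intro a c
    have hs : ¬ Summable (fun n => g (n + a)) := by
      rw [summable_nat_add_iff a]; exact hgsum
    have ht2 : Filter.Tendsto (fun m => ∑ i ∈ Finset.range m, g (i + a)) Filter.atTop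
        Filter.atTop := by
      exact (not_summable_iff_tendsto_nat_atTop_of_nonneg (fun i => hg0 _)).mp hs
    rcases Filter.eventually_atTop.mp (ht2.eventually_ge_atTop c) with ⟨M, hM⟩
    refine ⟨a + max 1 M - 1, by omega, ?_⟩
    have h1 : (1:ℕ) ≤ max 1 M := le_max_left _ _
    have hIcc : Finset.Icc a (a + max 1 M - 1) = Finset.Ico a (a + max 1 M) := by
      rw [← Finset.Ico_add_one_right_eq_Icc]
      congr 1
      omega
    have : ∑ n ∈ Finset.Ico a (a + max 1 M), g n
        = ∑ i ∈ Finset.range (max 1 M), g (i + a) := by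
      rw [Finset.sum_Ico_eq_sum_range]
      simp only [add_tsub_cancel_left]
      exact Finset.sum_congr rfl (fun i _ => by rw [add_comm])
    rw [hIcc, this]
    exact hM _ (le_max_right _ _)
  -- step existence
  have hstep : ∀ p : ℕ, ∀ δ c : ℝ, ∃ ab : ℕ × ℕ,
      0 < δ → δ ≤ c →
        p < ab.1 ∧ ab.1 ≤ ab.2 ∧ (∀ n, ab.1 ≤ n → g n < δ) ∧
        c ≤ ∑ n ∈ Finset.Icc ab.1 ab.2, g n ∧
        (∑ n ∈ Finset.Icc ab.1 ab.2, g n) < c + δ := by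
    intro p δ c
    by_cases hδ : 0 < δ ∧ δ ≤ c
    · obtain ⟨hδ0, hδc⟩ := hδ
      obtain ⟨N, hN⟩ := hc0 δ hδ0
      set a := max N (p + 1) with ha
      have haN : N ≤ a := le_max_left _ _
      have hap : p < a := lt_of_lt_of_le (Nat.lt_succ_self p) (le_max_right _ _)
      have hsmall : ∀ n, a ≤ n → g n < δ := fun n hn => hN n (le_trans haN hn)
      have hex : ∃ b : ℕ, a ≤ b ∧ c ≤ ∑ n ∈ Finset.Icc a b, g n := hdiv a c
      set b := Nat.find hex with hb
      obtain ⟨hab, hcb⟩ := Nat.find_spec hex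
      have hane : a ≠ b := by
        intro h
        have : (∑ n ∈ Finset.Icc a b, g n) = g a := by
          rw [← h, Finset.Icc_self, Finset.sum_singleton]
        have h1 : g a < δ := hsmall a le_rfl
        have h2 : c ≤ g a := this ▸ hcb
        linarith
      have hab' : a < b := lt_of_le_of_ne hab hane
      have hmin : ¬ (a ≤ b - 1 ∧ c ≤ ∑ n ∈ Finset.Icc a (b - 1), g n) :=
        Nat.find_min hex (by omega)
      have hsmallsum : (∑ n ∈ Finset.Icc a (b - 1), g n) < c := by
        by_contra h
        exact hmin ⟨by omega, le_of_not_gt h⟩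
      have hsplit : (∑ n ∈ Finset.Icc a b, g n)
          = (∑ n ∈ Finset.Icc a (b - 1), g n) + g b := by
        have : b = (b - 1) + 1 := by omega
        rw [this, Finset.sum_Icc_succ_top (by omega : a ≤ (b-1) + 1)]
        congr 1
      refine ⟨(a, b), fun _ _ => ⟨hap, hab, hsmall, hcb, ?_⟩⟩
      have hgb : g b < δ := hsmall b hab
      calc (∑ n ∈ Finset.Icc a b, g n)
          = (∑ n ∈ Finset.Icc a (b - 1), g n) + g b := hsplit
        _ < c + δ := by linarith
    · exact ⟨(p + 1, p + 1), fun h1 h2 => absurd ⟨h1, h2⟩ hδ⟩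
  choose stepF hstepF using hstep
  -- next δ
  set dnext : ℕ → ℕ × ℕ → ℝ := fun k ab =>
    min ((1/2 : ℝ)^(k+1))
      (if h : ((Finset.Icc ab.1 ab.2).filter (fun n => g n ≠ 0)).Nonempty
       then ((Finset.Icc ab.1 ab.2).filter (fun n => g n ≠ 0)).inf' h g else 1) with hdnext
  set F : ℕ → ℕ × ℕ := fun k => Nat.rec (stepF 0 1 (t+1))
    (fun k ih => stepF ih.2 (dnext k ih) (t + (1/2 : ℝ)^(k+1))) k with hF
  set δ : ℕ → ℝ := fun k => Nat.casesOn k 1 (fun j => dnext j (F j)) with hδdef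
  have hF0 : F 0 = stepF 0 1 (t+1) := rfl
  have hFs : ∀ k, F (k+1) = stepF (F k).2 (δ (k+1)) (t + (1/2 : ℝ)^(k+1)) := fun k => rfl
  have hdpos : ∀ k ab, 0 < dnext k ab := by
    intro k ab
    refine lt_min (by positivity) ?_
    split_ifs with h
    · rw [Finset.lt_inf'_iff]
      intro n hn
      have := (Finset.mem_filter.mp hn).2
      exact lt_of_le_of_ne (hg0 n) (Ne.symm this)
    · norm_num
  have hδpos : ∀ k, 0 < δ k := by
    intro k; cases k with
    | zero => norm_num [hδdef]
    | succ j => exact hdpos j (F j)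
  have hδhalf : ∀ k, δ k ≤ (1/2 : ℝ)^k := by
    intro k; cases k with
    | zero => norm_num [hδdef]
    | succ j => exact min_le_left _ _
  -- main invariant
  have hmain : ∀ k : ℕ,
      (F k).1 ≤ (F k).2 ∧ (∀ n, (F k).1 ≤ n → g n < δ k) ∧
      t + (1/2 : ℝ)^k ≤ (∑ n ∈ Finset.Icc (F k).1 (F k).2, g n) ∧
      (∑ n ∈ Finset.Icc (F k).1 (F k).2, g n) < t + (1/2 : ℝ)^k + δ k ∧
      (F k).2 < (F (k+1)).1 := by
    intro k
    have hk : 0 < δ k := hδpos k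
    have hkc : δ k ≤ t + (1/2 : ℝ)^k := le_trans (hδhalf k) (by linarith)
    have hcur : (F k).1 ≤ (F k).2 ∧ (∀ n, (F k).1 ≤ n → g n < δ k) ∧
        t + (1/2 : ℝ)^k ≤ (∑ n ∈ Finset.Icc (F k).1 (F k).2, g n) ∧
        (∑ n ∈ Finset.Icc (F k).1 (F k).2, g n) < t + (1/2 : ℝ)^k + δ k := by
      cases k with
      | zero =>
        have h := hstepF 0 1 (t+1) (by norm_num) (by linarith)
        rw [← hF0] at h
        have h0 : δ 0 = 1 := rfl
        have h1 : (1/2 : ℝ)^0 = 1 := by norm_num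
        rw [h0, h1]
        exact ⟨h.2.1, fun n hn => (h.2.2.1 n hn), h.2.2.2.1, h.2.2.2.2⟩
      | succ j =>
        have h := hstepF (F j).2 (δ (j+1)) (t + (1/2:ℝ)^(j+1)) (hδpos (j+1))
          (le_trans (hδhalf (j+1)) (by linarith))
        rw [← hFs j] at h
        exact ⟨h.2.1, h.2.2.1, h.2.2.2.1, h.2.2.2.2⟩
    have hnext := hstepF (F k).2 (δ (k+1)) (t + (1/2:ℝ)^(k+1)) (hδpos (k+1))
      (le_trans (hδhalf (k+1)) (by linarith))
    rw [← hFs k] at hnext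
    exact ⟨hcur.1, hcur.2.1, hcur.2.2.1, hcur.2.2.2, hnext.1⟩
  set J : ℕ → Finset ℕ := fun k => Finset.Icc (F k).1 (F k).2 with hJ
  set A : Set ℕ := {n | ∃ k, n ∈ J k} with hA
  have hproj : ∀ k, ∀ n ∈ J k, projSet A g n = g n := by
    intro k n hn
    simp only [projSet, hA]
    rw [if_pos ⟨k, hn⟩]
  have hS : ∀ k, oneStar (projSet A g) (J k) = ∑ n ∈ Finset.Icc (F k).1 (F k).2, g n := by
    intro k
    exact Finset.sum_congr rfl (fun n hn => hproj k n hn)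
  refine ⟨A, J, ⟨⟨fun k => ⟨(F k).1, (F k).2, (hmain k).1, rfl⟩, ?_⟩, ?_, ?_, ?_⟩, t, ?_, le_rfl⟩
  · -- right dominance
    intro k n hn m hm
    have h1 : n ≤ (F k).2 := (Finset.mem_Icc.mp hn).2
    have h2 : (F (k+1)).1 ≤ m := (Finset.mem_Icc.mp hm).1
    have := (hmain k).2.2.2.2
    omega
  · -- support
    intro n hn
    by_contra h
    push_neg at h
    have : n ∉ A := fun ⟨k, hk⟩ => h k hk
    simp only [projSet, if_neg this] at hn
    exact hn rfl
  · -- nonincreasing block sums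
    intro k
    rw [hS (k+1), hS k]
    have h1 := (hmain (k+1)).2.2.2.1
    have h2 := (hmain k).2.2.1
    have h3 := hδhalf (k+1)
    have hp : (1/2:ℝ)^(k+1) + (1/2:ℝ)^(k+1) = (1/2:ℝ)^k := by
      rw [pow_succ]; ring
    linarith
  · -- value condition
    intro k n hn hne m hm
    rw [hproj k n hn] at hne ⊢
    rw [hproj (k+1) m hm]
    have hgn : 0 < g n := lt_of_le_of_ne (hg0 n) (Ne.symm hne)
    have hm1 : (F (k+1)).1 ≤ m := (Finset.mem_Icc.mp hm).1
    have hgm : g m < δ (k+1) := (hmain (k+1)).2.1 m hm1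
    have hne' : ((Finset.Icc (F k).1 (F k).2).filter (fun j => g j ≠ 0)).Nonempty :=
      ⟨n, Finset.mem_filter.mpr ⟨hn, hne⟩⟩
    have hδle : δ (k+1) ≤ g n := by
      have : δ (k+1) = dnext k (F k) := rfl
      rw [this, hdnext]
      refine le_trans (min_le_right _ _) ?_
      rw [dif_pos hne']
      exact Finset.inf'_le g (Finset.mem_filter.mpr ⟨hn, hne⟩)
    linarith
  · -- convergence to t
    have hlim : Filter.Tendsto (fun k : ℕ => t + 2 * (1/2:ℝ)^k) Filter.atTop (nhds t) := by
      have h2 : Filter.Tendsto (fun k : ℕ => (1/2:ℝ)^k) Filter.atTop (nhds 0) := by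
        apply _root_.tendsto_pow_atTop_nhds_zero_of_lt_one <;> norm_num
      have := (h2.const_mul (2:ℝ)).const_add t
      simpa using this
    have hlim' : Filter.Tendsto (fun k : ℕ => t + (1/2:ℝ)^k) Filter.atTop (nhds t) := by
      have h2 : Filter.Tendsto (fun k : ℕ => (1/2:ℝ)^k) Filter.atTop (nhds 0) := by
        apply _root_.tendsto_pow_atTop_nhds_zero_of_lt_one <;> norm_num
      have := h2.const_add t
      simpa using this
    refine tendsto_of_tendsto_of_tendsto_of_le_of_le hlim' hlim ?_ ?_
    · intro k
      simp only [hS]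
      exact le_trans (by linarith) ((hmain k).2.2.1)
    · intro k
      simp only [hS]
      have h1 := (hmain k).2.2.2.1
      have h2 := hδhalf k
      linarith
end

section
/- Let g : ℕ → [0,∞) be Leibnizian with admissible sequence 𝒥 = (J_k)_{k≥1}. Let τ : ℕ → {−1,1} satisfy τ(n) = (−1)^{k−1} for every k ≥ 1 and every n ∈ J_k, and set f = M_τ(g). Then ‖f‖_𝔹 = α(g,𝒥), and the net (β(f,A))_{A∈𝒢(f)} converges to ω(g,𝒥), i.e. for every ε > 0 there is A ∈ 𝒢(f) such that |β(f,B) − ω(g,𝒥)| < ε for every B ∈ 𝒢(f) with A ⊆ B. In particular, if ω(g,𝒥) = 0 then f ∈ 𝔹₀. -/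
open Filter ENNReal
open scoped Classical

namespace Stmt7Aux


lemma alt : ∀ (L : ℕ) (v : ℕ → ℝ), (∀ j, v (j+1) ≤ v j) → (∀ j, 0 ≤ v j) →
    0 ≤ ∑ j ∈ Finset.range L, (-1:ℝ)^j * v j ∧ ∑ j ∈ Finset.range L, (-1:ℝ)^j * v j ≤ v 0
  | 0, v, _, h2 => by simp [h2 0]
  | (L+1), v, h1, h2 => by
    have IH := alt L (fun j => v (j+1)) (fun j => h1 (j+1)) (fun j => h2 (j+1))
    rw [Finset.sum_range_succ']
    have hrw : ∀ j, (-1:ℝ)^(j+1) * v (j+1) = -((-1:ℝ)^j * v (j+1)) := by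
      intro j; ring
    rw [Finset.sum_congr rfl (fun j _ => hrw j), Finset.sum_neg_distrib]
    constructor
    · have := IH.2
      have h01 := h1 0
      simp only [pow_zero, one_mul]
      linarith
    · have := IH.1
      simp only [pow_zero, one_mul]
      linarith

lemma alt_bound (S t : ℕ → ℝ) (hSanti : ∀ k l, k ≤ l → S l ≤ S k) (hS0 : ∀ k, 0 ≤ S k)
    (ht0 : ∀ k, 0 ≤ t k) (htS : ∀ k, t k ≤ S k)
    (m q : ℕ) (hlow : ∀ k, k < m → t k = 0) (hhigh : ∀ k, q < k → t k = 0)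
    (hint : ∀ k, m < k → k < q → t k = S k)
    (N K : ℕ) (hK : K ≤ m) :
    |∑ k ∈ Finset.range N, (-1:ℝ)^k * t k| ≤ S K := by
  -- monotonicity of t above m
  have hmono : ∀ k, m < k → t (k+1) ≤ t k := by
    intro k hk
    rcases lt_or_ge k q with h | h
    · calc t (k+1) ≤ S (k+1) := htS _
        _ ≤ S k := hSanti _ _ (Nat.le_succ k)
        _ = t k := (hint k hk h).symm
    · rw [hhigh (k+1) (by omega)]; exact ht0 k
  rcases le_or_gt N m with hNm | hNm
  · have : ∑ k ∈ Finset.range N, (-1:ℝ)^k * t k = 0 := by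
      apply Finset.sum_eq_zero
      intro k hk
      rw [hlow k (by simp at hk; omega)]; ring
    rw [this, abs_zero]; exact hS0 K
  · have hsub : Finset.Ico m N ⊆ Finset.range N := by
      intro k hk; simp at hk ⊢; omega
    have hzero : ∀ k ∈ Finset.range N, k ∉ Finset.Ico m N → (-1:ℝ)^k * t k = 0 := by
      intro k hk hk'
      simp at hk hk'
      rw [hlow k (by omega)]; ring
    rw [← Finset.sum_subset hsub hzero, Finset.sum_Ico_eq_sum_range]
    have hrw : ∀ j, (-1:ℝ)^(m+j) * t (m+j) = (-1:ℝ)^m * ((-1:ℝ)^j * t (m+j)) := by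
      intro j; rw [pow_add]; ring
    rw [Finset.sum_congr rfl (fun j _ => hrw j), ← Finset.mul_sum, abs_mul, abs_pow,
      abs_neg, abs_one, one_pow, one_mul]
    -- now bound |∑ j ∈ range (N-m), (-1)^j * t (m+j)|
    obtain ⟨L, hL⟩ : ∃ L, N - m = L + 1 := ⟨N - m - 1, by omega⟩
    rw [hL, Finset.sum_range_succ']
    have hrw2 : ∀ j, (-1:ℝ)^(j+1) * t (m+(j+1)) = -((-1:ℝ)^j * t (m+1+j)) := by
      intro j
      have : m + (j+1) = m+1+j := by omega
      rw [this]; ring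
    rw [Finset.sum_congr rfl (fun j _ => hrw2 j), Finset.sum_neg_distrib]
    have halt := alt L (fun j => t (m+1+j)) (fun j => hmono (m+1+j) (by omega)) (fun j => ht0 _)
    simp only [pow_zero, one_mul, Nat.add_zero] at *
    have h1 : t m ≤ S K := le_trans (htS m) (hSanti K m hK)
    have h2 : t (m+1) ≤ S K := le_trans (htS (m+1)) (hSanti K (m+1) (by omega))
    rw [abs_le]
    constructor
    · have := halt.2
      have := ht0 m
      linarith
    · have := halt.1
      linarith


section Blocks
variable {g : ℕ → ℝ} {J : ℕ → Finset ℕ}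

lemma block_nonempty (hJ : RightDominant J) (k : ℕ) : (J k).Nonempty := by
  obtain ⟨a, b, hab, h⟩ := hJ.1 k
  exact ⟨a, by rw [h]; exact Finset.mem_Icc.mpr ⟨le_refl a, hab⟩⟩

lemma block_lt_aux (hJ : RightDominant J) :
    ∀ d k, ∀ n ∈ J k, ∀ x ∈ J (k + d + 1), n < x := by
  intro d
  induction d with
  | zero => intro k n hn x hx; exact hJ.2 k n hn x hx
  | succ d ih =>
    intro k n hn x hx
    obtain ⟨y, hy⟩ := block_nonempty hJ (k + d + 1)
    have h1 : n < y := ih k n hn y hy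
    have h2 : y < x := hJ.2 (k + d + 1) y hy x hx
    omega

lemma block_lt (hJ : RightDominant J) {k l : ℕ} (h : k < l) :
    ∀ n ∈ J k, ∀ x ∈ J l, n < x := by
  intro n hn x hx
  have : l = k + (l - k - 1) + 1 := by omega
  exact block_lt_aux hJ (l - k - 1) k n hn x (by rw [← this]; exact hx)

lemma block_disjoint (hJ : RightDominant J) {k l : ℕ} (h : k ≠ l) :
    Disjoint (J k) (J l) := by
  rw [Finset.disjoint_left]
  intro x hx hx'
  rcases lt_or_gt_of_ne h with h' | h'
  · exact lt_irrefl x (block_lt hJ h' x hx x hx')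
  · exact lt_irrefl x (block_lt hJ h' x hx' x hx)

lemma mem_ge (hJ : RightDominant J) : ∀ k, ∀ n ∈ J k, k ≤ n := by
  intro k
  induction k with
  | zero => intro n _; exact Nat.zero_le n
  | succ k ih =>
    intro n hn
    obtain ⟨y, hy⟩ := block_nonempty hJ k
    have h1 : k ≤ y := ih y hy
    have h2 : y < n := hJ.2 k y hy n hn
    omega

lemma S_nonneg (hg : ∀ n, 0 ≤ g n) (k : ℕ) : 0 ≤ oneStar g (J k) :=
  Finset.sum_nonneg (fun n _ => hg n)

lemma S_antitone (hJ : Admissible g J) : ∀ k l, k ≤ l → oneStar g (J l) ≤ oneStar g (J k) := by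
  have : Antitone (fun k => oneStar g (J k)) := antitone_nat_of_succ_le hJ.2.2.1
  intro k l h; exact this h

lemma chain_aux (hg : ∀ n, 0 ≤ g n) (hJ : Admissible g J) :
    ∀ d k, ∀ n ∈ J k, g n ≠ 0 → ∀ x ∈ J (k + d + 1), g x < g n := by
  intro d
  induction d with
  | zero => intro k n hn hgn x hx; exact hJ.2.2.2 k n hn hgn x hx
  | succ d ih =>
    intro k n hn hgn x hx
    have hgnpos : 0 < g n := lt_of_le_of_ne (hg n) (Ne.symm hgn)
    by_cases hy : ∃ y ∈ J (k + d + 1), g y ≠ 0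
    · obtain ⟨y, hy, hgy⟩ := hy
      have h1 : g y < g n := ih k n hn hgn y hy
      have h2 : g x < g y := hJ.2.2.2 (k + d + 1) y hy hgy x hx
      linarith
    · push_neg at hy
      have hS : oneStar g (J (k + d + 1)) = 0 :=
        Finset.sum_eq_zero (fun y hyk => hy y hyk)
      have hS2 : oneStar g (J (k + d + 1 + 1)) = 0 :=
        le_antisymm (hS ▸ hJ.2.2.1 (k + d + 1)) (S_nonneg hg _)
      have hx0 : g x = 0 :=
        (Finset.sum_eq_zero_iff_of_nonneg (fun y _ => hg y)).mp hS2 x hx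
      rw [hx0]; exact hgnpos

lemma chain (hg : ∀ n, 0 ≤ g n) (hJ : Admissible g J) {k l : ℕ} (h : k < l) :
    ∀ n ∈ J k, g n ≠ 0 → ∀ x ∈ J l, g x < g n := by
  intro n hn hgn x hx
  have heq : l = k + (l - k - 1) + 1 := by omega
  exact chain_aux hg hJ (l - k - 1) k n hn hgn x (by rw [← heq]; exact hx)


lemma key (hg : ∀ n, 0 ≤ g n) (hJ : Admissible g J) {τ : ℕ → ℝ}
    (hτ1 : ∀ n, τ n = 1 ∨ τ n = -1) (hτ : ∀ k : ℕ, ∀ n ∈ J k, τ n = (-1)^k)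
    {B : Finset ℕ} (hB : GreedySet (fun n => τ n * g n) B)
    {K : ℕ} (hKB : ∀ k, k < K → ∀ n ∈ J k, g n ≠ 0 → n ∈ B)
    (a b : ℕ) :
    |oneStar (fun n => τ n * g n) (Finset.Icc a b \ B)| ≤ oneStar g (J K) := by
  have habs : ∀ n, |τ n * g n| = g n := by
    intro n; rcases hτ1 n with h | h <;> rw [h] <;> simp [abs_of_nonneg (hg n)]
  set E := Finset.Icc a b \ B with hE
  set t : ℕ → ℝ := fun k => ∑ n ∈ E ∩ J k, g n with ht
  have hdecomp : oneStar (fun n => τ n * g n) E = ∑ k ∈ Finset.range (b+1), (-1:ℝ)^k * t k := by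
    have hsub : (Finset.range (b+1)).biUnion (fun k => E ∩ J k) ⊆ E :=
      Finset.biUnion_subset.mpr (fun k _ => Finset.inter_subset_left)
    have hzero : ∀ n ∈ E, n ∉ (Finset.range (b+1)).biUnion (fun k => E ∩ J k) → τ n * g n = 0 := by
      intro n hn hn'
      by_contra hfn
      have hgn : g n ≠ 0 := fun h => hfn (by rw [h]; ring)
      obtain ⟨k, hk⟩ := hJ.2.1 n hgn
      have hnb : n ≤ b := (Finset.mem_Icc.mp (Finset.mem_sdiff.mp hn).1).2
      have hkn : k ≤ n := mem_ge hJ.1 k n hk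
      exact hn' (Finset.mem_biUnion.mpr ⟨k, Finset.mem_range.mpr (by omega),
        Finset.mem_inter.mpr ⟨hn, hk⟩⟩)
    have hdisj : (↑(Finset.range (b+1)) : Set ℕ).PairwiseDisjoint (fun k => E ∩ J k) := by
      intro k _ l _ hkl
      exact Finset.disjoint_left.mpr (fun x hx hx' =>
        Finset.disjoint_left.mp (block_disjoint hJ.1 hkl)
          (Finset.mem_inter.mp hx).2 (Finset.mem_inter.mp hx').2)
    calc oneStar (fun n => τ n * g n) E = ∑ n ∈ E, τ n * g n := rfl
      _ = ∑ n ∈ (Finset.range (b+1)).biUnion (fun k => E ∩ J k), τ n * g n :=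
          (Finset.sum_subset hsub hzero).symm
      _ = ∑ k ∈ Finset.range (b+1), ∑ n ∈ E ∩ J k, τ n * g n := Finset.sum_biUnion hdisj
      _ = ∑ k ∈ Finset.range (b+1), (-1:ℝ)^k * t k := by
          apply Finset.sum_congr rfl
          intro k _
          rw [Finset.mul_sum]
          apply Finset.sum_congr rfl
          intro n hn
          rw [hτ k n (Finset.mem_inter.mp hn).2]
  have ht0 : ∀ k, 0 ≤ t k := fun k => Finset.sum_nonneg (fun n _ => hg n)
  have htS : ∀ k, t k ≤ oneStar g (J k) := fun k =>
    Finset.sum_le_sum_of_subset_of_nonneg Finset.inter_subset_right (fun n _ _ => hg n)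
  have htK : ∀ k, k < K → t k = 0 := by
    intro k hk
    apply Finset.sum_eq_zero
    intro n hn
    obtain ⟨hnE, hnJ⟩ := Finset.mem_inter.mp hn
    by_contra hgn
    exact (Finset.mem_sdiff.mp hnE).2 (hKB k hk n hnJ hgn)
  have hthigh : ∀ k, b < k → t k = 0 := by
    intro k hk
    apply Finset.sum_eq_zero
    intro n hn
    obtain ⟨hnE, hnJ⟩ := Finset.mem_inter.mp hn
    have h1 := mem_ge hJ.1 k n hnJ
    have h2 := (Finset.mem_Icc.mp (Finset.mem_sdiff.mp hnE).1).2
    omega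
  rw [hdecomp]
  by_cases hZ : ∀ k, t k = 0
  · rw [Finset.sum_eq_zero (fun k _ => by rw [hZ k]; ring), abs_zero]
    exact S_nonneg hg K
  push_neg at hZ
  obtain ⟨k0, hk0⟩ := hZ
  set Z := (Finset.range (b+1)).filter (fun k => t k ≠ 0) with hZdef
  have hZne : Z.Nonempty := by
    refine ⟨k0, Finset.mem_filter.mpr ⟨Finset.mem_range.mpr ?_, hk0⟩⟩
    by_contra h
    exact hk0 (hthigh k0 (by omega))
  set m := Z.min' hZne with hm
  set q := Z.max' hZne with hq
  have hmZ : t m ≠ 0 := (Finset.mem_filter.mp (Z.min'_mem hZne)).2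
  have hqZ : t q ≠ 0 := (Finset.mem_filter.mp (Z.max'_mem hZne)).2
  have hmem : ∀ k, t k ≠ 0 → m ≤ k ∧ k ≤ q := by
    intro k hk
    have hkb : k < b+1 := by by_contra h; exact hk (hthigh k (by omega))
    have hkZ : k ∈ Z := Finset.mem_filter.mpr ⟨Finset.mem_range.mpr hkb, hk⟩
    exact ⟨Z.min'_le k hkZ, Z.le_max' k hkZ⟩
  have hlow : ∀ k, k < m → t k = 0 := by
    intro k hk; by_contra h; have := (hmem k h).1; omega
  have hhigh : ∀ k, q < k → t k = 0 := by
    intro k hk; by_contra h; have := (hmem k h).2; omega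
  have hKm : K ≤ m := by
    by_contra h
    exact hmZ (htK m (by omega))
  have hint : ∀ k, m < k → k < q → t k = oneStar g (J k) := by
    intro k hmk hkq
    obtain ⟨nm, hnm, hgnm⟩ : ∃ n ∈ E ∩ J m, g n ≠ 0 := by
      by_contra h; push_neg at h
      exact hmZ (Finset.sum_eq_zero h)
    obtain ⟨nq, hnq, hgnq⟩ : ∃ n ∈ E ∩ J q, g n ≠ 0 := by
      by_contra h; push_neg at h
      exact hqZ (Finset.sum_eq_zero h)
    have heq : E ∩ J k = J k := by
      apply Finset.inter_eq_right.mpr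
      intro x hx
      obtain ⟨hnmE, hnmJ⟩ := Finset.mem_inter.mp hnm
      obtain ⟨hnqE, hnqJ⟩ := Finset.mem_inter.mp hnq
      have h1 : nm < x := block_lt hJ.1 hmk nm hnmJ x hx
      have h2 : x < nq := block_lt hJ.1 hkq x hx nq hnqJ
      have h3 := Finset.mem_Icc.mp (Finset.mem_sdiff.mp hnmE).1
      have h4 := Finset.mem_Icc.mp (Finset.mem_sdiff.mp hnqE).1
      rw [Finset.mem_sdiff]
      constructor
      · exact Finset.mem_Icc.mpr ⟨by omega, by omega⟩
      · intro hxB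
        have hle := hB x hxB nm (Finset.mem_sdiff.mp hnmE).2
        simp only [habs] at hle
        have hlt := chain hg hJ hmk nm hnmJ hgnm x hx
        linarith
    show ∑ n ∈ E ∩ J k, g n = oneStar g (J k)
    rw [heq]; rfl
  exact alt_bound (fun k => oneStar g (J k)) t (S_antitone hJ) (S_nonneg hg)
    ht0 htS m q hlow hhigh hint (b+1) K hKm

end Blocks
end Stmt7Aux


/-- if `g ≥ 0` is Leibnizian with admissible sequence `J`,
`ω(g,J) = w`, and `f = M_τ(g)` where `τ` takes the value `(−1)^k` on `J k`, then
`‖f‖_𝔹 = α(g,J) = 𝟙*_{J 0}(g)`, the net `(β(f,A))_{A ∈ 𝒢(f)}` converges to `w`,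
and if `w = 0` then `f ∈ 𝔹₀`. -/
theorem stmt_7 (g : ℕ → ℝ) (hg : ∀ n, 0 ≤ g n) (J : ℕ → Finset ℕ)
    (hJ : Admissible g J) (w : ℝ)
    (hw : Filter.Tendsto (fun k => oneStar g (J k)) Filter.atTop (nhds w))
    (τ : ℕ → ℝ) (hτ1 : ∀ n, τ n = 1 ∨ τ n = -1)
    (hτ : ∀ k : ℕ, ∀ n ∈ J k, τ n = (-1) ^ k) :
    BNorm (fun n => τ n * g n) = ENNReal.ofReal (oneStar g (J 0)) ∧
    (∀ ε : ℝ, 0 < ε → ∃ A : Finset ℕ, GreedySet (fun n => τ n * g n) A ∧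
      ∀ B : Finset ℕ, GreedySet (fun n => τ n * g n) B → A ⊆ B →
        ENNReal.ofReal (w - ε) ≤ beta (fun n => τ n * g n) B ∧
        beta (fun n => τ n * g n) B ≤ ENNReal.ofReal (w + ε)) ∧
    (w = 0 → MemB0 (fun n => τ n * g n)) := by
  have habs : ∀ n, |τ n * g n| = g n := by
    intro n; rcases hτ1 n with h | h <;> rw [h] <;> simp [abs_of_nonneg (hg n)]
  have hwle : ∀ k, w ≤ oneStar g (J k) := by
    intro k
    refine le_of_tendsto hw (Filter.eventually_atTop.mpr ⟨k, fun l hl => ?_⟩)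
    exact Stmt7Aux.S_antitone hJ k l hl
  have hw0 : 0 ≤ w :=
    ge_of_tendsto hw (Filter.Eventually.of_forall (fun k => Stmt7Aux.S_nonneg hg k))
  have hblocksum : ∀ L : ℕ, oneStar (fun n => τ n * g n) (J L) = (-1:ℝ)^L * oneStar g (J L) := by
    intro L
    show ∑ n ∈ J L, τ n * g n = (-1:ℝ)^L * ∑ n ∈ J L, g n
    rw [Finset.mul_sum]
    exact Finset.sum_congr rfl (fun n hn => by rw [hτ L n hn])
  have habsblock : ∀ L : ℕ, |oneStar (fun n => τ n * g n) (J L)| = oneStar g (J L) := by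
    intro L
    rw [hblocksum L, abs_mul, abs_pow, abs_neg, abs_one, one_pow, one_mul,
      abs_of_nonneg (Stmt7Aux.S_nonneg hg L)]
  -- Part 2 first (as a `have`, reused in part 3)
  have hpart2 : ∀ ε : ℝ, 0 < ε → ∃ A : Finset ℕ, GreedySet (fun n => τ n * g n) A ∧
      ∀ B : Finset ℕ, GreedySet (fun n => τ n * g n) B → A ⊆ B →
        ENNReal.ofReal (w - ε) ≤ beta (fun n => τ n * g n) B ∧
        beta (fun n => τ n * g n) B ≤ ENNReal.ofReal (w + ε) := by
    intro ε hε
    obtain ⟨K, hK⟩ : ∃ K, oneStar g (J K) < w + ε := by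
      have : ∀ᶠ k in Filter.atTop, oneStar g (J k) < w + ε :=
        hw.eventually_lt_const (lt_add_of_pos_right w hε)
      exact this.exists
    set A := ((Finset.range (K+1)).biUnion J).filter (fun n => g n ≠ 0) with hA
    have hAgreedy : GreedySet (fun n => τ n * g n) A := by
      intro n hn j hj
      obtain ⟨hnB, hgn⟩ := Finset.mem_filter.mp hn
      obtain ⟨k, hkr, hkJ⟩ := Finset.mem_biUnion.mp hnB
      rw [habs, habs]
      by_cases hgj : g j = 0
      · rw [hgj]; exact hg n
      · obtain ⟨l, hl⟩ := hJ.2.1 j hgj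
        have hlK : K < l := by
          by_contra h
          exact hj (Finset.mem_filter.mpr ⟨Finset.mem_biUnion.mpr
            ⟨l, Finset.mem_range.mpr (by omega), hl⟩, hgj⟩)
        have hkl : k < l := by
          have := Finset.mem_range.mp hkr; omega
        exact le_of_lt (Stmt7Aux.chain hg hJ hkl n hkJ hgn j hl)
    refine ⟨A, hAgreedy, ?_⟩
    intro B hB hAB
    constructor
    · -- lower bound
      set L := B.sup id + 1 with hL
      have hLB : ∀ x ∈ J L, x ∉ B := by
        intro x hx hxB
        have h1 := Stmt7Aux.mem_ge hJ.1 L x hx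
        have h2 : id x ≤ B.sup id := Finset.le_sup hxB
        simp only [id] at h2
        omega
      obtain ⟨aL, bL, habL, hJL⟩ := hJ.1.1 L
      have hsdiff : Finset.Icc aL bL \ B = J L := by
        rw [← hJL]
        exact Finset.sdiff_eq_self_iff_disjoint.mpr (Finset.disjoint_left.mpr hLB)
      calc ENNReal.ofReal (w - ε) ≤ ENNReal.ofReal (oneStar g (J L)) := by
            apply ENNReal.ofReal_le_ofReal
            have := hwle L; linarith
        _ = ENNReal.ofReal |oneStar (fun n => τ n * g n) (Finset.Icc aL bL \ B)| := by
            rw [hsdiff, habsblock L]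
        _ ≤ beta (fun n => τ n * g n) B :=
            le_iSup₂ (f := fun a b => ENNReal.ofReal
              |oneStar (fun n => τ n * g n) (Finset.Icc a b \ B)|) aL bL
    · -- upper bound
      apply iSup₂_le
      intro a b
      apply ENNReal.ofReal_le_ofReal
      have hKB : ∀ k, k < K + 1 → ∀ n ∈ J k, g n ≠ 0 → n ∈ B := by
        intro k hk n hn hgn
        exact hAB (Finset.mem_filter.mpr ⟨Finset.mem_biUnion.mpr
          ⟨k, Finset.mem_range.mpr hk, hn⟩, hgn⟩)
      calc |oneStar (fun n => τ n * g n) (Finset.Icc a b \ B)| ≤ oneStar g (J (K+1)) :=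
            Stmt7Aux.key hg hJ hτ1 hτ hB hKB a b
        _ ≤ oneStar g (J K) := hJ.2.2.1 K
        _ ≤ w + ε := le_of_lt hK
  refine ⟨?_, hpart2, ?_⟩
  · -- Part 1 : BNorm = ofReal (S 0)
    apply le_antisymm
    · apply iSup₂_le
      intro A hA
      apply iSup₂_le
      intro a b
      apply ENNReal.ofReal_le_ofReal
      exact Stmt7Aux.key hg hJ hτ1 hτ hA (fun k hk => absurd hk (Nat.not_lt_zero k)) a b
    · have h0 : GreedySet (fun n => τ n * g n) (∅ : Finset ℕ) :=
        fun n hn => absurd hn (Finset.notMem_empty n)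
      obtain ⟨a0, b0, hab0, hJ0⟩ := hJ.1.1 0
      have hsdiff : Finset.Icc a0 b0 \ (∅ : Finset ℕ) = J 0 := by
        rw [Finset.sdiff_empty, hJ0]
      calc ENNReal.ofReal (oneStar g (J 0))
          = ENNReal.ofReal |oneStar (fun n => τ n * g n) (Finset.Icc a0 b0 \ (∅ : Finset ℕ))| := by
            rw [hsdiff, habsblock 0]
        _ ≤ beta (fun n => τ n * g n) (∅ : Finset ℕ) :=
            le_iSup₂ (f := fun a b => ENNReal.ofReal
              |oneStar (fun n => τ n * g n) (Finset.Icc a b \ (∅ : Finset ℕ))|) a0 b0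
        _ ≤ BNorm (fun n => τ n * g n) :=
            le_iSup₂ (f := fun A (_ : A ∈ {A : Finset ℕ | GreedySet (fun n => τ n * g n) A}) =>
              beta (fun n => τ n * g n) A) ∅ h0
  · -- Part 3
    intro hweq
    subst hweq
    constructor
    · -- Memc0
      rw [Memc0, Metric.tendsto_atTop]
      intro ε hε
      obtain ⟨K, hK⟩ : ∃ K, oneStar g (J K) < ε := by
        have : ∀ᶠ k in Filter.atTop, oneStar g (J k) < ε :=
          hw.eventually_lt_const hε
        exact this.exists
      refine ⟨((Finset.range K).biUnion J).sup id + 1, fun n hn => ?_⟩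
      rw [Real.dist_eq, sub_zero, habs n]
      by_cases hgn : g n = 0
      · rw [hgn]; exact hε
      · obtain ⟨k, hk⟩ := hJ.2.1 n hgn
        have hkK : K ≤ k := by
          by_contra h
          have hmem : n ∈ (Finset.range K).biUnion J :=
            Finset.mem_biUnion.mpr ⟨k, Finset.mem_range.mpr (by omega), hk⟩
          have h2 : id n ≤ ((Finset.range K).biUnion J).sup id := Finset.le_sup hmem
          simp only [id] at h2
          omega
        calc g n ≤ oneStar g (J k) := Finset.single_le_sum (fun i _ => hg i) hk
          _ ≤ oneStar g (J K) := Stmt7Aux.S_antitone hJ K k hkK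
          _ < ε := hK
    · -- the ε-condition of MemB0
      intro ε hε
      obtain ⟨A, hA, hAprop⟩ := hpart2 (ε/2) (half_pos hε)
      refine ⟨A, hA, fun B hB hAB => ?_⟩
      have := (hAprop B hB hAB).2
      calc beta (fun n => τ n * g n) B ≤ ENNReal.ofReal (0 + ε/2) := this
        _ < ENNReal.ofReal ε := by
            rw [ENNReal.ofReal_lt_ofReal_iff hε]
            linarith
end

section
/- Let g : ℕ → [0,∞) be Leibnizian with admissible sequence 𝒥 = (J_k)_{k≥1}, and suppose ω(g,𝒥) > 0. Then there is a family (ρ_N)_{N⊆ℕ}, indexed by all subsets N of ℕ, of sequences ρ_N : ℕ → ℝ with |ρ_N(n)| ≤ 1 for all n, such that ‖M_{ρ_N}(g)‖_𝔹 ≤ α(g,𝒥) for every N ⊆ ℕ, and ‖M_{ρ_N}(g) − M_{ρ_M}(g)‖_𝔹 ≥ ω(g,𝒥) whenever N ≠ M. In particular, the set {M_{ρ_N}(g) : N ⊆ ℕ} is uncountable. -/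
open Filter ENNReal
open scoped Classical

/-!
Pair the blocks as `(J (2k), J (2k+1))` and let `ρ_N` be `+1` on `J (2k)` and `-1` on `J (2k+1)`
for `k ∈ N`, and `0` elsewhere. If `k` lies in exactly one of `N`, `M`, the interval `J (2k)` alone
gives `‖M_{ρ_N}(g) - M_{ρ_M}(g)‖_𝔹 ≥ ∑_{J (2k)} g ≥ ω`.

For the upper bound let `A` be greedy for `ρ_N g`, `I` an interval and `T = I \ A`. Since the values
of `g` strictly decrease from block to block, a block lying strictly between a block where `T`
meets the support of `ρ_N g` and a later block meeting `T` is contained in `T`: it lies inside `I`,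
and none of its points can be in `A` without beating a point outside `A` in size. So the sum of
`ρ_N g` over `T` is a sum of pair differences `t (2k) - t (2k+1)` of partial block sums in which
only the first and the last pair can be truncated; it is squeezed between `-α` and `α` by
telescoping the antitone block sums.
-/

open Finset

namespace RightDominant

variable {J : ℕ → Finset ℕ}

lemma nonempty (hJ : RightDominant J) (k : ℕ) : (J k).Nonempty := by
  obtain ⟨a, b, hab, h⟩ := hJ.1 k
  exact h ▸ nonempty_Icc.mpr hab

lemma lt_of_lt (hJ : RightDominant J) {j j' n m : ℕ} (hjj' : j < j') (hn : n ∈ J j)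
    (hm : m ∈ J j') : n < m := by
  induction j', hjj' using Nat.le_induction generalizing m with
  | base => exact hJ.2 j n hn m hm
  | succ j' _ ih =>
    obtain ⟨p, hp⟩ := hJ.nonempty j'
    exact (ih hp).trans (hJ.2 j' p hp m hm)

lemma eq_of_mem (hJ : RightDominant J) {j j' n : ℕ} (hn : n ∈ J j) (hn' : n ∈ J j') :
    j = j' := by
  rcases lt_trichotomy j j' with h | h | h
  · exact absurd (hJ.lt_of_lt h hn hn') (lt_irrefl n)
  · exact h
  · exact absurd (hJ.lt_of_lt h hn' hn) (lt_irrefl n)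

lemma le_of_mem (hJ : RightDominant J) {j n : ℕ} (hn : n ∈ J j) : j ≤ n := by
  induction j generalizing n with
  | zero => exact Nat.zero_le n
  | succ j ih =>
    obtain ⟨p, hp⟩ := hJ.nonempty j
    exact (ih hp).trans_lt (hJ.2 j p hp n hn)

end RightDominant

namespace Admissible

variable {g : ℕ → ℝ} {J : ℕ → Finset ℕ}

lemma antitone_oneStar (hJ : Admissible g J) : Antitone fun k => oneStar g (J k) :=
  antitone_nat_of_succ_le hJ.2.2.1

lemma apply_lt_of_lt (hJ : Admissible g J) (hpos : ∀ k, 0 < oneStar g (J k)) {j j' n m : ℕ}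
    (hjj' : j < j') (hn : n ∈ J j) (hgn : g n ≠ 0) (hm : m ∈ J j') : g m < g n := by
  induction j', hjj' using Nat.le_induction generalizing m with
  | base => exact hJ.2.2.2 j n hn hgn m hm
  | succ j' _ ih =>
    obtain ⟨p, hp, hgp⟩ := exists_ne_zero_of_sum_ne_zero (hpos j').ne'
    exact (hJ.2.2.2 j' p hp hgp m hm).trans (ih hp)

lemma subset_Icc_sdiff (hJ : Admissible g J) (hpos : ∀ k, 0 < oneStar g (J k)) {f : ℕ → ℝ}
    (hfg : ∀ n, |f n| ≤ g n) {A : Finset ℕ} (hA : GreedySet f A) {a b j₁ j j₂ n₁ n₂ : ℕ}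
    (hn₁ : n₁ ∈ Icc a b \ A) (hn₁J : n₁ ∈ J j₁) (hgn₁ : g n₁ ≠ 0) (hfn₁ : |f n₁| = g n₁)
    (hn₂ : n₂ ∈ Icc a b \ A) (hn₂J : n₂ ∈ J j₂) (h₁ : j₁ < j) (h₂ : j < j₂) :
    J j ⊆ Icc a b \ A := by
  intro n hn
  rw [Finset.mem_sdiff, mem_Icc] at hn₁ hn₂ ⊢
  refine ⟨⟨hn₁.1.1.trans (hJ.1.lt_of_lt h₁ hn₁J hn).le,
    (hJ.1.lt_of_lt h₂ hn hn₂J).le.trans hn₂.1.2⟩, fun hnA => ?_⟩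
  have hgreedy := hA n hnA n₁ hn₁.2
  have hdecr := hJ.apply_lt_of_lt hpos h₁ hn₁J hgn₁ hn
  linarith [hfg n]

end Admissible

noncomputable def pairSign (N : Set ℕ) (j : ℕ) : ℝ := if j / 2 ∈ N then (-1) ^ j else 0

noncomputable def blockSign (J : ℕ → Finset ℕ) (N : Set ℕ) (n : ℕ) : ℝ :=
  if h : ∃ j, n ∈ J j then pairSign N (Nat.find h) else 0

section Signs

variable {J : ℕ → Finset ℕ} {N : Set ℕ} {j : ℕ}

lemma pairSign_two_mul (N : Set ℕ) (k : ℕ) : pairSign N (2 * k) = if k ∈ N then 1 else 0 := by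
  simp [pairSign, pow_mul]

lemma pairSign_two_mul_add_one (N : Set ℕ) (k : ℕ) :
    pairSign N (2 * k + 1) = if k ∈ N then -1 else 0 := by
  rw [pairSign, show (2 * k + 1) / 2 = k by omega]
  simp [pow_succ, pow_mul]

lemma abs_pairSign_le (N : Set ℕ) (j : ℕ) : |pairSign N j| ≤ 1 := by
  unfold pairSign
  split_ifs <;> simp

lemma abs_pairSign_of_mem (h : j / 2 ∈ N) : |pairSign N j| = 1 := by
  simp [pairSign, h]

lemma abs_blockSign_le (J : ℕ → Finset ℕ) (N : Set ℕ) (n : ℕ) : |blockSign J N n| ≤ 1 := by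
  unfold blockSign
  split_ifs
  exacts [abs_pairSign_le _ _, by simp]

lemma blockSign_of_mem (hJ : RightDominant J) (N : Set ℕ) {n : ℕ} (hn : n ∈ J j) :
    blockSign J N n = pairSign N j := by
  rw [blockSign, dif_pos ⟨j, hn⟩, hJ.eq_of_mem (Nat.find_spec (⟨j, hn⟩ : ∃ j, n ∈ J j)) hn]

end Signs

lemma sum_range_two_mul {M : Type*} [AddCommMonoid M] (F : ℕ → M) (m : ℕ) :
    ∑ j ∈ range (2 * m), F j = ∑ k ∈ range m, (F (2 * k) + F (2 * k + 1)) := by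
  induction m with
  | zero => simp
  | succ m ih =>
    rw [show 2 * (m + 1) = 2 * m + 1 + 1 by ring, sum_range_succ, sum_range_succ, ih,
      sum_range_succ, add_assoc]

lemma Admissible.oneStar_blockSign_mul {g : ℕ → ℝ} {J : ℕ → Finset ℕ} (hJ : Admissible g J)
    (N : Set ℕ) {T : Finset ℕ} {m : ℕ} (hT : ∀ n ∈ T, n < m) :
    oneStar (fun n => blockSign J N n * g n) T =
      ∑ k ∈ range m with k ∈ N, (oneStar g (T ∩ J (2 * k)) - oneStar g (T ∩ J (2 * k + 1))) := by
  have hdisj : (range (2 * m) : Set ℕ).PairwiseDisjoint fun j => T ∩ J j :=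
    fun i _ j _ hij => disjoint_left.2 fun n hi hj =>
      hij (hJ.1.eq_of_mem (mem_inter.1 hi).2 (mem_inter.1 hj).2)
  have hblocks : oneStar (fun n => blockSign J N n * g n) T =
      ∑ j ∈ range (2 * m), pairSign N j * oneStar g (T ∩ J j) := by
    rw [oneStar, ← sum_subset (s₁ := (range (2 * m)).biUnion fun j => T ∩ J j)
      (biUnion_subset.2 fun j _ => inter_subset_left) ?_, sum_biUnion hdisj]
    · refine sum_congr rfl fun j _ => ?_
      rw [oneStar, mul_sum]
      exact sum_congr rfl fun n hn => by rw [blockSign_of_mem hJ.1 N (mem_inter.1 hn).2]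
    · intro n hnT hn
      suffices g n = 0 by simp [this]
      by_contra hgn
      obtain ⟨j, hj⟩ := hJ.2.1 n hgn
      have := hJ.1.le_of_mem hj
      have := hT n hnT
      exact hn (mem_biUnion.2 ⟨j, mem_range.2 (by omega), mem_inter.2 ⟨hnT, hj⟩⟩)
  rw [hblocks, sum_range_two_mul, sum_filter]
  refine sum_congr rfl fun k _ => ?_
  rw [pairSign_two_mul, pairSign_two_mul_add_one]
  split_ifs <;> ring

section PairSums

variable {c t : ℕ → ℝ}

lemma sum_pair_sub_le (hc : Antitone c) {S : Finset ℕ} {K : ℕ} (hS : ∀ k ∈ S, k < K) :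
    ∑ k ∈ S, (c (2 * k) - c (2 * k + 1)) ≤ c 0 - c (2 * K) := calc
  _ ≤ ∑ k ∈ range K, (c (2 * k) - c (2 * k + 1)) :=
    sum_le_sum_of_subset_of_nonneg (fun k hk => mem_range.2 (hS k hk))
      fun k _ _ => sub_nonneg.2 (hc (by omega))
  _ ≤ ∑ k ∈ range K, (c (2 * k) - c (2 * (k + 1))) :=
    sum_le_sum fun k _ => by linarith [hc (show 2 * k + 1 ≤ 2 * (k + 1) by omega)]
  _ = c 0 - c (2 * K) := by simpa using sum_range_sub' (fun k => c (2 * k)) K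

lemma abs_sum_pair_sub_le (hc : Antitone c) (ht₀ : ∀ j, 0 ≤ t j) (htc : ∀ j, t j ≤ c j)
    (P : Finset ℕ) (hlo : ∀ k ∈ P, ∀ k' ∈ P, k' < k → t (2 * k + 1) ≤ t (2 * k))
    (hhi : ∀ k ∈ P, ∀ k' ∈ P, k < k' → t (2 * k) - t (2 * k + 1) ≤ c (2 * k) - c (2 * k + 1)) :
    |∑ k ∈ P, (t (2 * k) - t (2 * k + 1))| ≤ c 0 := by
  rcases P.eq_empty_or_nonempty with rfl | hP
  · simpa using (ht₀ 0).trans (htc 0)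
  refine abs_le.2 ⟨?_, ?_⟩
  · set k₀ := P.min' hP
    have hrest : 0 ≤ ∑ k ∈ P.erase k₀, (t (2 * k) - t (2 * k + 1)) :=
      sum_nonneg fun k hk => sub_nonneg.2 <| hlo k (mem_of_mem_erase hk) k₀ (P.min'_mem hP)
        ((P.min'_le k (mem_of_mem_erase hk)).lt_of_ne' (ne_of_mem_erase hk))
    rw [← add_sum_erase P _ (P.min'_mem hP)]
    linarith [ht₀ (2 * k₀), htc (2 * k₀ + 1), hc (Nat.zero_le (2 * k₀ + 1))]
  · set K := P.max' hP
    have hrest : ∑ k ∈ P.erase K, (t (2 * k) - t (2 * k + 1)) ≤ c 0 - c (2 * K) :=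
      have hlt : ∀ k ∈ P.erase K, k < K := fun k hk =>
        (P.le_max' k (mem_of_mem_erase hk)).lt_of_ne (ne_of_mem_erase hk)
      (sum_le_sum fun k hk => hhi k (mem_of_mem_erase hk) K (P.max'_mem hP) (hlt k hk)).trans
        (sum_pair_sub_le hc hlt)
    rw [← sum_erase_add P _ (P.max'_mem hP)]
    linarith [htc (2 * K), ht₀ (2 * K + 1)]

lemma abs_sum_filter_pair_sub_le (hc : Antitone c) (ht₀ : ∀ j, 0 ≤ t j) (htc : ∀ j, t j ≤ c j)
    (N : Set ℕ)
    (hfull : ∀ j₁ j j₂, j₁ < j → j < j₂ → j₁ / 2 ∈ N → t j₁ ≠ 0 → t j₂ ≠ 0 → t j = c j)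
    (m : ℕ) : |∑ k ∈ range m with k ∈ N, (t (2 * k) - t (2 * k + 1))| ≤ c 0 := by
  rw [← sum_filter_ne_zero]
  set P := {k ∈ range m | k ∈ N}.filter fun k => t (2 * k) - t (2 * k + 1) ≠ 0
  have hwit : ∀ k ∈ P, ∃ j, j / 2 = k ∧ k ∈ N ∧ t j ≠ 0 := by
    intro k hk
    simp only [P, mem_filter] at hk
    by_cases h : t (2 * k) = 0
    · exact ⟨2 * k + 1, by omega, hk.1.2, fun h' => hk.2 (by rw [h, h', sub_zero])⟩
    · exact ⟨2 * k, by omega, hk.1.2, h⟩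
  refine abs_sum_pair_sub_le hc ht₀ htc _ (fun k _ k' hk' hlt => ?_) (fun k hk k' hk' hlt => ?_)
  · obtain ⟨j₁, rfl, hN, hj₁⟩ := hwit k' hk'
    by_cases h : t (2 * k + 1) = 0
    · exact h ▸ ht₀ _
    · rw [hfull j₁ (2 * k) (2 * k + 1) (by omega) (by omega) hN hj₁ h]
      exact (htc _).trans (hc (by omega))
  · obtain ⟨-, -, hkN, -⟩ := hwit k hk
    obtain ⟨j₂, rfl, -, hj₂⟩ := hwit k' hk'
    by_cases h : t (2 * k) = 0
    · rw [h]
      linarith [ht₀ (2 * k + 1), hc (show 2 * k ≤ 2 * k + 1 by omega)]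
    · rw [hfull (2 * k) (2 * k + 1) j₂ (by omega) (by omega)
        (by rwa [show 2 * k / 2 = k by omega]) h hj₂]
      linarith [htc (2 * k)]

end PairSums

lemma Admissible.abs_oneStar_blockSign_mul_le {g : ℕ → ℝ} {J : ℕ → Finset ℕ}
    (hg : ∀ n, 0 ≤ g n) (hJ : Admissible g J) (hpos : ∀ k, 0 < oneStar g (J k)) (N : Set ℕ)
    {A : Finset ℕ} (hA : GreedySet (fun n => blockSign J N n * g n) A) (a b : ℕ) :
    |oneStar (fun n => blockSign J N n * g n) (Icc a b \ A)| ≤ oneStar g (J 0) := by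
  set T := Icc a b \ A
  have habs : ∀ n, |blockSign J N n * g n| ≤ g n := fun n => by
    rw [abs_mul, abs_of_nonneg (hg n)]
    exact mul_le_of_le_one_left (hg n) (abs_blockSign_le J N n)
  rw [hJ.oneStar_blockSign_mul N (m := b + 1)
    fun n hn => Nat.lt_succ_of_le (mem_Icc.1 (mem_sdiff.1 hn).1).2]
  refine abs_sum_filter_pair_sub_le (t := fun j => oneStar g (T ∩ J j))
    (c := fun j => oneStar g (J j)) hJ.antitone_oneStar (fun j => sum_nonneg fun n _ => hg n)
    (fun j => sum_le_sum_of_subset_of_nonneg inter_subset_right fun n _ _ => hg n) N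
    (fun j₁ j j₂ h₁ h₂ hN ht₁ ht₂ => ?_) (b + 1)
  obtain ⟨n₁, hn₁, hgn₁⟩ := exists_ne_zero_of_sum_ne_zero ht₁
  obtain ⟨n₂, hn₂, -⟩ := exists_ne_zero_of_sum_ne_zero ht₂
  rw [mem_inter] at hn₁ hn₂
  have hfn₁ : |blockSign J N n₁ * g n₁| = g n₁ := by
    rw [abs_mul, blockSign_of_mem hJ.1 N hn₁.2, abs_pairSign_of_mem hN, one_mul,
      abs_of_nonneg (hg n₁)]
  have hsub := hJ.subset_Icc_sdiff hpos habs hA hn₁.1 hn₁.2 hgn₁ hfn₁ hn₂.1 hn₂.2 h₁ h₂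
  show oneStar g (T ∩ J j) = oneStar g (J j)
  rw [inter_eq_right.2 hsub]

lemma bNorm_le_ofReal {f : ℕ → ℝ} {C : ℝ}
    (h : ∀ A, GreedySet f A → ∀ a b, |oneStar f (Icc a b \ A)| ≤ C) :
    BNorm f ≤ ENNReal.ofReal C :=
  iSup₂_le fun A hA => iSup₂_le fun a b => ENNReal.ofReal_le_ofReal (h A hA a b)

lemma ofReal_abs_oneStar_Icc_le_bNorm (f : ℕ → ℝ) (a b : ℕ) :
    ENNReal.ofReal |oneStar f (Icc a b)| ≤ BNorm f := by
  have hgreedy : GreedySet f ∅ := fun n hn => absurd hn (notMem_empty n)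
  calc ENNReal.ofReal |oneStar f (Icc a b)| = ENNReal.ofReal |oneStar f (Icc a b \ ∅)| := by
        rw [sdiff_empty]
    _ ≤ beta f ∅ := le_iSup₂ (f := fun a b => ENNReal.ofReal |oneStar f (Icc a b \ ∅)|) a b
    _ ≤ BNorm f := le_iSup₂ (f := fun A (_ : A ∈ {A | GreedySet f A}) => beta f A) ∅ hgreedy

lemma RightDominant.abs_oneStar_blockSign_sub {J : ℕ → Finset ℕ} (hJ : RightDominant J)
    (g : ℕ → ℝ) {N M : Set ℕ} {k : ℕ} (hk : ¬(k ∈ N ↔ k ∈ M)) :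
    |oneStar (fun n => blockSign J N n * g n - blockSign J M n * g n) (J (2 * k))| =
      |oneStar g (J (2 * k))| := by
  have hfactor : oneStar (fun n => blockSign J N n * g n - blockSign J M n * g n) (J (2 * k)) =
      (pairSign N (2 * k) - pairSign M (2 * k)) * oneStar g (J (2 * k)) := by
    rw [oneStar, oneStar, mul_sum]
    exact sum_congr rfl fun n hn => by
      rw [blockSign_of_mem hJ N hn, blockSign_of_mem hJ M hn]
      ring
  rw [hfactor, abs_mul, pairSign_two_mul, pairSign_two_mul]
  by_cases hN : k ∈ N <;> by_cases hM : k ∈ M <;> simp_all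

lemma not_countable_range_of_injective {α : Type*} {F : Set ℕ → α} (hF : F.Injective) :
    ¬(Set.range F).Countable := fun hcount => by
  have := hcount.preimage hF
  rw [Set.preimage_range, Set.countable_univ_iff] at this
  obtain ⟨e, he⟩ := Countable.exists_injective_nat (Set ℕ)
  exact Function.cantor_injective e he

/-- if `g ≥ 0` is Leibnizian with admissible sequence `J` and
`ω(g,J) = w > 0`, then there is a family `(ρ_N)_{N ⊆ ℕ}` in the unit ball of `ℓ_∞`
with `‖M_{ρ_N}(g)‖_𝔹 ≤ α(g,J)` and `‖M_{ρ_N}(g) − M_{ρ_M}(g)‖_𝔹 ≥ w` for `N ≠ M`;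
in particular `{M_{ρ_N}(g) : N ⊆ ℕ}` is uncountable. -/
theorem stmt_8 (g : ℕ → ℝ) (hg : ∀ n, 0 ≤ g n) (J : ℕ → Finset ℕ)
    (hJ : Admissible g J) (w : ℝ)
    (hw : Filter.Tendsto (fun k => oneStar g (J k)) Filter.atTop (nhds w))
    (hwpos : 0 < w) :
    ∃ ρ : Set ℕ → (ℕ → ℝ),
      (∀ N n, |ρ N n| ≤ 1) ∧
      (∀ N : Set ℕ, BNorm (fun n => ρ N n * g n) ≤ ENNReal.ofReal (oneStar g (J 0))) ∧
      (∀ N M : Set ℕ, N ≠ M →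
        ENNReal.ofReal w ≤ BNorm (fun n => ρ N n * g n - ρ M n * g n)) ∧
      ¬ (Set.range fun N : Set ℕ => (fun n => ρ N n * g n)).Countable := by
  have hw_le : ∀ k, w ≤ oneStar g (J k) := hJ.antitone_oneStar.le_of_tendsto hw
  have hsep : ∀ N M : Set ℕ, N ≠ M → ∃ a b,
      w ≤ |oneStar (fun n => blockSign J N n * g n - blockSign J M n * g n) (Icc a b)| := by
    intro N M hNM
    obtain ⟨k, hk⟩ : ∃ k, ¬(k ∈ N ↔ k ∈ M) := by simpa [Set.ext_iff] using hNM
    obtain ⟨a, b, -, hab⟩ := hJ.1.1 (2 * k)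
    refine ⟨a, b, ?_⟩
    rw [← hab, hJ.1.abs_oneStar_blockSign_sub g hk]
    exact (hw_le _).trans (le_abs_self _)
  have hinj : Function.Injective fun N n => blockSign J N n * g n := by
    intro N M hNM
    by_contra hne
    obtain ⟨a, b, h⟩ := hsep N M hne
    have hzero : ∀ n, blockSign J N n * g n - blockSign J M n * g n = 0 :=
      fun n => sub_eq_zero.2 (congrFun hNM n)
    simp only [hzero, oneStar, sum_const_zero, abs_zero] at h
    linarith
  refine ⟨blockSign J, abs_blockSign_le J,
    fun N => bNorm_le_ofReal fun A hA a b =>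
      hJ.abs_oneStar_blockSign_mul_le hg (fun k => hwpos.trans_le (hw_le k)) N hA a b,
    fun N M hNM => ?_, not_countable_range_of_injective hinj⟩
  obtain ⟨a, b, h⟩ := hsep N M hNM
  exact (ENNReal.ofReal_le_ofReal h).trans (ofReal_abs_oneStar_Icc_le_bNorm _ a b)
end

section
/- Let f = (a_n)_{n≥1} be a sequence with a_1 = a_2 = 0, 0 ≤ a_n ≤ 1 for all n, and a := ∑_n a_n satisfying 1 ≤ a < ∞. Let e₁ and e₂ denote the first two unit vector sequences (e_i(n) = 1 if n = i and 0 otherwise). Then, for 0 ≤ t ≤ 1, ‖e₁ − t·e₂ + f‖_𝔹 = 1 + a if t = 1, and ‖e₁ − t·e₂ + f‖_𝔹 = 1 + a − t if 0 ≤ t < 1. -/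
open Filter ENNReal
open scoped Classical

/-- for `f` with `f 0 = f 1 = 0`, `0 ≤ f ≤ 1` and `a = ∑_n f n ∈ [1,∞)`,
and `0 ≤ t ≤ 1`, one has `‖e₁ − t·e₂ + f‖_𝔹 = 1 + a` if `t = 1`,
and `‖e₁ − t·e₂ + f‖_𝔹 = 1 + a − t` if `0 ≤ t < 1`. -/
theorem stmt_9 (f : ℕ → ℝ) (hf1 : f 0 = 0) (hf2 : f 1 = 0)
    (hge : ∀ n, 0 ≤ f n) (hle : ∀ n, f n ≤ 1)
    (a : ℝ) (ha : HasSum f a) (ha1 : 1 ≤ a)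
    (t : ℝ) (ht0 : 0 ≤ t) (ht1 : t ≤ 1) :
    BNorm (fun n => (if n = 0 then (1 : ℝ) else 0) - t * (if n = 1 then 1 else 0) + f n)
      = if t = 1 then ENNReal.ofReal (1 + a) else ENNReal.ofReal (1 + a - t) := by
  set g : ℕ → ℝ := fun n => (if n = 0 then (1 : ℝ) else 0) - t * (if n = 1 then 1 else 0) + f n
    with hg
  have hFnn : ∀ S : Finset ℕ, 0 ≤ ∑ n ∈ S, f n := fun S => Finset.sum_nonneg fun n _ => hge n
  have hFle : ∀ S : Finset ℕ, ∑ n ∈ S, f n ≤ a := fun S => sum_le_hasSum S (fun n _ => hge n) ha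
  have hdecomp : ∀ S : Finset ℕ, oneStar g S
      = (if 0 ∈ S then (1:ℝ) else 0) - t * (if 1 ∈ S then 1 else 0) + ∑ n ∈ S, f n := by
    intro S
    simp only [oneStar, hg, Finset.sum_add_distrib, Finset.sum_sub_distrib, ← Finset.mul_sum,
      Finset.sum_ite_eq' S 0 (fun _ => (1:ℝ)), Finset.sum_ite_eq' S 1 (fun _ => (1:ℝ))]
  have hIcc : ∀ b : ℕ, Finset.Icc 0 b = Finset.range (b+1) := by
    intro b; ext n; simp [Nat.lt_succ_iff]
  have hS : Tendsto (fun b => ∑ n ∈ Finset.Icc 0 b, f n) atTop (nhds a) := by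
    have h := ha.tendsto_sum_nat.comp (tendsto_add_atTop_nat 1)
    refine h.congr fun b => ?_
    simp [hIcc, Function.comp]
  -- upper bound tool
  have upper : ∀ (A : Finset ℕ) (r : ℝ),
      (∀ p q : ℕ, |oneStar g (Finset.Icc p q \ A)| ≤ r) → beta g A ≤ ENNReal.ofReal r := by
    intro A r h
    exact iSup_le fun p => iSup_le fun q => ENNReal.ofReal_le_ofReal (h p q)
  -- lower bound tool
  have key : ∀ (A : Finset ℕ) (C : ℝ), 0 ≤ C →
      (∀ b : ℕ, 1 ≤ b → oneStar g (Finset.Icc 0 b \ A) = C + ∑ n ∈ Finset.Icc 0 b, f n) →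
      ENNReal.ofReal (C + a) ≤ beta g A := by
    intro A C hC hval
    have h1 : Tendsto (fun b => C + ∑ n ∈ Finset.Icc 0 b, f n) atTop (nhds (C + a)) :=
      tendsto_const_nhds.add hS
    have h2 : Tendsto (fun b => ENNReal.ofReal (C + ∑ n ∈ Finset.Icc 0 b, f n)) atTop
        (nhds (ENNReal.ofReal (C + a))) :=
      (ENNReal.continuous_ofReal.tendsto (C + a)).comp h1
    have hT : Tendsto (fun b => ENNReal.ofReal |oneStar g (Finset.Icc 0 b \ A)|) atTop
        (nhds (ENNReal.ofReal (C + a))) := by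
      refine h2.congr' ?_
      filter_upwards [eventually_ge_atTop 1] with b hb
      rw [hval b hb, abs_of_nonneg (by linarith [hFnn (Finset.Icc 0 b)])]
    refine le_of_tendsto' hT fun b => ?_
    calc ENNReal.ofReal |oneStar g (Finset.Icc 0 b \ A)|
        ≤ ⨆ q : ℕ, ENNReal.ofReal |oneStar g (Finset.Icc 0 q \ A)| :=
          le_iSup (fun q => ENNReal.ofReal |oneStar g (Finset.Icc 0 q \ A)|) b
      _ ≤ beta g A :=
          le_iSup (fun p => ⨆ q : ℕ, ENNReal.ofReal |oneStar g (Finset.Icc p q \ A)|) 0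
  rcases lt_or_eq_of_le ht1 with h1 | h1
  · -- t < 1
    rw [if_neg (by linarith : t ≠ 1)]
    apply le_antisymm
    · refine iSup₂_le fun A hA => upper A _ fun p q => ?_
      rw [hdecomp]
      set S := Finset.Icc p q \ A with hSdef
      have hF0 := hFnn S; have hFa := hFle S
      rw [abs_le]
      constructor
      · split_ifs <;> linarith
      · by_cases h0 : 0 ∈ S
        · have hp0 : p = 0 := Nat.le_zero.mp (Finset.mem_Icc.mp (Finset.mem_sdiff.mp h0).1).1
          have h0A : 0 ∉ A := (Finset.mem_sdiff.mp h0).2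
          rw [if_pos h0]
          by_cases hq : 1 ≤ q
          · have h1A : 1 ∉ A := by
              intro hmem
              have hle' := hA 1 hmem 0 h0A
              have hg0 : g 0 = 1 := by simp [hg, hf1]
              have hg1 : g 1 = -t := by simp [hg, hf2]
              rw [hg0, hg1, abs_neg, abs_of_nonneg ht0, abs_one] at hle'
              linarith
            have h1S : 1 ∈ S := Finset.mem_sdiff.mpr
              ⟨Finset.mem_Icc.mpr ⟨by omega, hq⟩, h1A⟩
            rw [if_pos h1S]; linarith
          · have hq0 : q = 0 := by omega
            have hS1 : S = {0} := by
              apply Finset.Subset.antisymm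
              · intro n hn
                have hn' := Finset.mem_Icc.mp (Finset.mem_sdiff.mp hn).1
                simp only [Finset.mem_singleton]; omega
              · exact Finset.singleton_subset_iff.mpr h0
            rw [hS1]
            simp [hf1]
            linarith
        · rw [if_neg h0]; split_ifs <;> linarith
    · have hgreedy : GreedySet g ∅ := fun n hn => absurd hn (Finset.notMem_empty n)
      have hval : ∀ b : ℕ, 1 ≤ b →
          oneStar g (Finset.Icc 0 b \ (∅ : Finset ℕ)) = (1 - t) + ∑ n ∈ Finset.Icc 0 b, f n := by
        intro b hb
        rw [Finset.sdiff_empty, hdecomp]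
        have h0 : 0 ∈ Finset.Icc 0 b := by simp
        have h1' : 1 ∈ Finset.Icc 0 b := by simp [hb]
        rw [if_pos h0, if_pos h1']; ring
      have hkey := key ∅ (1 - t) (by linarith) hval
      have hmem : (∅ : Finset ℕ) ∈ {A : Finset ℕ | GreedySet g A} := hgreedy
      calc ENNReal.ofReal (1 + a - t) = ENNReal.ofReal ((1 - t) + a) := by ring_nf
        _ ≤ beta g ∅ := hkey
        _ ≤ BNorm g := le_iSup₂ (f := fun (A : Finset ℕ) (_ : A ∈ {A : Finset ℕ | GreedySet g A})
              => beta g A) ∅ hmem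
  · -- t = 1
    subst h1
    rw [if_pos rfl]
    apply le_antisymm
    · refine iSup₂_le fun A _ => upper A _ fun p q => ?_
      rw [hdecomp]
      set S := Finset.Icc p q \ A
      have hF0 := hFnn S; have hFa := hFle S
      rw [abs_le]
      constructor <;> split_ifs <;> linarith
    · have hg1 : g 1 = -1 := by simp [hg, hf2]
      have hgreedy : GreedySet g ({1} : Finset ℕ) := by
        intro n hn k hk
        have hn1 : n = 1 := Finset.mem_singleton.mp hn
        have hk1 : k ≠ 1 := fun h => hk (by simp [h])
        subst hn1
        rw [hg1, abs_neg, abs_one]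
        rcases eq_or_ne k 0 with rfl | hk0
        · simp [hg, hf1]
        · have hgk : g k = f k := by simp [hg, hk1, hk0]
          rw [hgk, abs_of_nonneg (hge k)]; exact hle k
      have hval : ∀ b : ℕ, 1 ≤ b →
          oneStar g (Finset.Icc 0 b \ ({1} : Finset ℕ)) = 1 + ∑ n ∈ Finset.Icc 0 b, f n := by
        intro b hb
        rw [hdecomp]
        have h0 : 0 ∈ Finset.Icc 0 b \ ({1} : Finset ℕ) := by simp
        have h1' : 1 ∉ Finset.Icc 0 b \ ({1} : Finset ℕ) := by simp
        rw [if_pos h0, if_neg h1']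
        have hsum : ∑ n ∈ Finset.Icc 0 b \ ({1} : Finset ℕ), f n
            = ∑ n ∈ Finset.Icc 0 b, f n := by
          refine Finset.sum_subset Finset.sdiff_subset fun x hx hx' => ?_
          have hx1 : x = 1 := by
            by_contra hne
            exact hx' (Finset.mem_sdiff.mpr ⟨hx, by simp [hne]⟩)
          rw [hx1]; exact hf2
        rw [hsum]; ring
      have hkey := key {1} 1 zero_le_one hval
      have hmem : ({1} : Finset ℕ) ∈ {A : Finset ℕ | GreedySet g A} := hgreedy
      calc ENNReal.ofReal (1 + a) ≤ beta g {1} := hkey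
        _ ≤ BNorm g := le_iSup₂ (f := fun (A : Finset ℕ) (_ : A ∈ {A : Finset ℕ | GreedySet g A})
              => beta g A) {1} hmem
end
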